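/- arXiv:2012.03934 — 2 statements merged into one kernel-verified Lean document; each statement's English description precedes it below -/
import Mathlib

section
/- Let n ≥ 1 and let D ⊆ S₀ be a C-set in the semigroup S₀. Then there exists a sequence ⟨wᵢ⟩_{i=1}^∞ of n-variable words over A such that for every l ≥ 1, every m₁ < m₂ < … < m_l in ℕ, and every choice of ā₁ ∈ A_{m₁}ⁿ, ā₂ ∈ A_{m₂}ⁿ, …, ā_l ∈ A_{m_l}ⁿ, the concatenation w_{m₁}(ā₁) w_{m₂}(ā₂) ⋯ w_{m_l}(ā_l) belongs to D. -/
open scoped BigOperators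

attribute [local instance] Ultrafilter.mul Ultrafilter.semigroup

namespace InfHJ

variable {α : Type*}

/-- The union alphabet `A = ⋃ᵢ Aᵢ`. -/
def bigA (𝒜 : ℕ → Set α) : Set α := ⋃ i, 𝒜 i

/-- `S₀`: the set of nonempty finite words all of whose letters come from `A`
(viewed inside the free monoid on `α ⊕ Fin n`, letters `Sum.inl a`, variables `Sum.inr i`). -/
def S0 (𝒜 : ℕ → Set α) (n : ℕ) : Set (FreeMonoid (α ⊕ Fin n)) :=
  {w | FreeMonoid.toList w ≠ [] ∧
    ∀ x ∈ FreeMonoid.toList w, ∃ a ∈ bigA 𝒜, x = Sum.inl a}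

/-- `Sₙ`: the set of `n`-variable words over `A`: every letter is in `A` and
every variable `vᵢ` (`i : Fin n`) occurs at least once. -/
def SV (𝒜 : ℕ → Set α) (n : ℕ) : Set (FreeMonoid (α ⊕ Fin n)) :=
  {w | (∀ x ∈ FreeMonoid.toList w, ∀ a : α, x = Sum.inl a → a ∈ bigA 𝒜) ∧
    ∀ i : Fin n, Sum.inr i ∈ FreeMonoid.toList w}

/-- Substitution `w(x⃗)`: replace every occurrence of the variable `vᵢ` by the letter `xᵢ`. -/
def subst {n : ℕ} (w : FreeMonoid (α ⊕ Fin n)) (x : Fin n → α) :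
    FreeMonoid (α ⊕ Fin n) :=
  FreeMonoid.map (Sum.elim Sum.inl fun i => Sum.inl (x i)) w

/-- The tuples `ā ∈ Aₘⁿ`. -/
def tuples (𝒜 : ℕ → Set α) (m n : ℕ) : Set (Fin n → α) := {a | ∀ j, a j ∈ 𝒜 m}

/-- `D` is a J-set in the (sub)semigroup `S` of the monoid `M`: for every finite set `F` of
sequences in `S` there are `m ≥ 1`, `a₁,…,a_{m+1} ∈ S` and `t₁ < … < t_m` such that
`a₁ f(t₁) a₂ f(t₂) ⋯ a_m f(t_m) a_{m+1} ∈ D` for every `f ∈ F`. -/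
def IsJSetIn {M : Type*} [Monoid M] (S D : Set M) : Prop :=
  ∀ F : Finset (ℕ → M), (∀ f ∈ F, ∀ t, f t ∈ S) →
    ∃ m : ℕ, 1 ≤ m ∧ ∃ a : Fin (m + 1) → M, (∀ i, a i ∈ S) ∧
      ∃ t : Fin m → ℕ, StrictMono t ∧ ∀ f ∈ F,
        (List.ofFn fun i : Fin m => a i.castSucc * f (t i)).prod * a (Fin.last m) ∈ D

/-- `D` is piecewise syndetic in the (sub)semigroup `S` of the monoid `M`: there is a finite
`F ⊆ S` such that for every finite `E ⊆ S` there is `x ∈ S` with `E·x ⊆ ⋃_{t ∈ F} t⁻¹D`. -/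
def IsPWSIn {M : Type*} [Monoid M] (S D : Set M) : Prop :=
  ∃ F : Finset M, ↑F ⊆ S ∧
    ∀ E : Finset M, ↑E ⊆ S → ∃ x ∈ S, ∀ e ∈ E, ∃ t ∈ F, t * (e * x) ∈ D

/-- A (two-sided) ideal of the subsemigroup `B`. -/
def IsIdealIn {T : Type*} [Mul T] (B I : Set T) : Prop :=
  I.Nonempty ∧ I ⊆ B ∧ ∀ x ∈ I, ∀ t ∈ B, t * x ∈ I ∧ x * t ∈ I

/-- `K` is the smallest (two-sided) ideal of the subsemigroup `B`. -/
def IsSmallestIdealIn {T : Type*} [Mul T] (B K : Set T) : Prop :=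
  IsIdealIn B K ∧ ∀ I, IsIdealIn B I → K ⊆ I

/-- `D` is central in the (sub)semigroup `S` of the semigroup `M`: `D` belongs to some
idempotent ultrafilter lying in the smallest two-sided ideal of
`βS = {q : Ultrafilter M | S ∈ q}`. -/
def IsCentralIn {M : Type*} [Semigroup M] (S D : Set M) : Prop :=
  ∃ p : Ultrafilter M, S ∈ p ∧ p * p = p ∧
    (∃ K : Set (Ultrafilter M), IsSmallestIdealIn {q : Ultrafilter M | S ∈ q} K ∧ p ∈ K) ∧
    D ∈ p

/-- `D` is a C-set in the (sub)semigroup `S` of the monoid `M`: `D` belongs to some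
idempotent ultrafilter on `S` all of whose members are J-sets in `S`. -/
def IsCSetIn {M : Type*} [Monoid M] (S D : Set M) : Prop :=
  ∃ p : Ultrafilter M, S ∈ p ∧ p * p = p ∧
    (∀ B ∈ p, IsJSetIn S (B ∩ S)) ∧ D ∈ p

/-- `FS(⟨xₙ⟩)` in a commutative additive monoid: all finite sums over nonempty finite index sets. -/
def FSset {T : Type*} [AddCommMonoid T] (x : ℕ → T) : Set T :=
  {s | ∃ H : Finset ℕ, H.Nonempty ∧ s = ∑ n ∈ H, x n}

/-- `FP(⟨y_t⟩)` in a (not necessarily commutative) monoid: all products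
`y_{t₁} ⋯ y_{t_l}` with `t₁ < … < t_l`, taken in increasing order of indices. -/
def FPset {T : Type*} [Monoid T] (y : ℕ → T) : Set T :=
  {u | ∃ G : Finset ℕ, G.Nonempty ∧ u = ((G.sort (· ≤ ·)).map y).prod}

/-- `C` is an IP set in the commutative monoid `T`. -/
def IsIPSet {T : Type*} [AddCommMonoid T] (C : Set T) : Prop :=
  ∃ x : ℕ → T, FSset x ⊆ C

/-- `τ(w) = |w|_{v}`: the number of occurrences of variables in `w`
(for one-variable words this is the number of occurrences of `v₁`). -/
def tauCount {n : ℕ} (w : FreeMonoid (α ⊕ Fin n)) : ℕ :=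
  (FreeMonoid.toList w).countP Sum.isRight

/-- `T`: the words over `{v₁,…,v_k}` in which every `vᵢ` occurs. -/
def Tfull (k : ℕ) : Set (FreeMonoid (Fin k)) :=
  {u | FreeMonoid.toList u ≠ [] ∧ ∀ i : Fin k, i ∈ FreeMonoid.toList u}

/-- `τ(w)`: delete from `w` all letters of `A` and all variables `vᵢ` with `i ≥ k`,
leaving a word over `{v₁,…,v_k}`. -/
def tauDel {n : ℕ} (k : ℕ) (w : FreeMonoid (α ⊕ Fin n)) : FreeMonoid (Fin k) :=
  FreeMonoid.ofList <| (FreeMonoid.toList w).filterMap fun x =>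
    match x with
    | Sum.inl _ => none
    | Sum.inr i => if h : (i : ℕ) < k then some ⟨i, h⟩ else none


theorem mul_mem_iff' {M : Type*} [Mul M] (p q : Ultrafilter M) (D : Set M) :
    D ∈ p * q ↔ {x | {y | x * y ∈ D} ∈ q} ∈ p := by
  have h := Ultrafilter.eventually_mul p q (· ∈ D)
  simpa [Filter.Eventually, Set.setOf_mem_eq] using h

def starSet {M : Type*} [Mul M] (p : Ultrafilter M) (D : Set M) : Set M :=
  {x | x ∈ D ∧ {y | x * y ∈ D} ∈ p}

theorem starSet_subset {M : Type*} [Mul M] (p : Ultrafilter M) (D : Set M) :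
    starSet p D ⊆ D := fun _ h => h.1

theorem starSet_mem {M : Type*} [Semigroup M] {p : Ultrafilter M} (hpp : p * p = p)
    {D : Set M} (hD : D ∈ p) : starSet p D ∈ p := by
  have h1 : {x | {y | x * y ∈ D} ∈ p} ∈ p := (mul_mem_iff' p p D).mp (by rw [hpp]; exact hD)
  have : starSet p D = D ∩ {x | {y | x * y ∈ D} ∈ p} := rfl
  rw [this]
  exact Filter.inter_mem hD h1

theorem starSet_shift {M : Type*} [Semigroup M] {p : Ultrafilter M} (hpp : p * p = p)
    {D : Set M} {x : M} (hx : x ∈ starSet p D) : {y | x * y ∈ starSet p D} ∈ p := by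
  obtain ⟨hxD, hA⟩ := hx
  have h2 : {y | {z | y * z ∈ {w | x * w ∈ D}} ∈ p} ∈ p :=
    (mul_mem_iff' p p _).mp (by rw [hpp]; exact hA)
  have heq : {y | x * y ∈ starSet p D}
      = {y | x * y ∈ D} ∩ {y | {z | y * z ∈ {w | x * w ∈ D}} ∈ p} := by
    ext y
    simp only [starSet, Set.mem_setOf_eq, Set.mem_inter_iff, mul_assoc]
  rw [heq]
  exact Filter.inter_mem hA h2

theorem mem_toList_listProd {β : Type*} (L : List (FreeMonoid β)) (x : β) :
    x ∈ FreeMonoid.toList L.prod ↔ ∃ z ∈ L, x ∈ FreeMonoid.toList z := by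
  induction L with
  | nil => simp [FreeMonoid.toList_one]
  | cons h t ih => simp [List.prod_cons, FreeMonoid.toList_mul, ih]

theorem subst_mul {n : ℕ} (w₁ w₂ : FreeMonoid (α ⊕ Fin n)) (x : Fin n → α) :
    subst (w₁ * w₂) x = subst w₁ x * subst w₂ x :=
  map_mul (FreeMonoid.map _) w₁ w₂

theorem subst_listProd {n : ℕ} (L : List (FreeMonoid (α ⊕ Fin n))) (x : Fin n → α) :
    subst L.prod x = (L.map (subst · x)).prod := by
  induction L with
  | nil => simp [subst]
  | cons h t ih => simp [List.prod_cons, subst_mul, ih]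

theorem subst_fixed {n : ℕ} {w : FreeMonoid (α ⊕ Fin n)}
    (h : ∀ x ∈ FreeMonoid.toList w, ∃ a : α, x = Sum.inl a) (x : Fin n → α) :
    subst w x = w := by
  have h2 : FreeMonoid.toList (subst w x) = FreeMonoid.toList w := by
    rw [subst, FreeMonoid.toList_map]
    conv_rhs => rw [← List.map_id (FreeMonoid.toList w)]
    apply List.map_congr_left
    intro y hy
    obtain ⟨a, rfl⟩ := h y hy
    rfl
  have := congrArg FreeMonoid.ofList h2
  simpa [FreeMonoid.ofList_toList] using this

/-- the base word `v₀ v₁ ⋯ v_{n-1}` -/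
def baseu (α : Type*) (n : ℕ) : FreeMonoid (α ⊕ Fin n) :=
  FreeMonoid.ofList (List.ofFn fun i : Fin n => Sum.inr i)

theorem toList_baseu (n : ℕ) :
    FreeMonoid.toList (baseu α n) = List.ofFn (fun i : Fin n => (Sum.inr i : α ⊕ Fin n)) := rfl

theorem toList_subst_baseu (n : ℕ) (x : Fin n → α) :
    FreeMonoid.toList (subst (baseu α n) x)
      = List.ofFn (fun i : Fin n => (Sum.inl (x i) : α ⊕ Fin n)) := by
  rw [subst, FreeMonoid.toList_map, toList_baseu, List.map_ofFn]
  rfl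

theorem subst_baseu_mem_S0 (𝒜 : ℕ → Set α) {n : ℕ} (hn : 1 ≤ n) {m : ℕ}
    {x : Fin n → α} (hx : x ∈ tuples 𝒜 m n) : subst (baseu α n) x ∈ S0 𝒜 n := by
  constructor
  · rw [toList_subst_baseu]
    intro hnil
    have := congrArg List.length hnil
    simp at this
    omega
  · rw [toList_subst_baseu]
    intro y hy
    rw [List.mem_ofFn] at hy
    obtain ⟨i, rfl⟩ := hy
    exact ⟨x i, Set.mem_iUnion.2 ⟨m, hx i⟩, rfl⟩

theorem tuples_finite (𝒜 : ℕ → Set α) (hfin : ∀ i, (𝒜 i).Finite) (m n : ℕ) :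
    (tuples 𝒜 m n).Finite := by
  have : tuples 𝒜 m n = Set.pi Set.univ (fun _ : Fin n => 𝒜 m) := by
    ext a; simp [tuples, Set.mem_pi]
  rw [this]
  exact Set.Finite.pi fun _ => hfin m

theorem exists_good_word (𝒜 : ℕ → Set α) (hfin : ∀ i, (𝒜 i).Finite) {n : ℕ} (hn : 1 ≤ n)
    {p : Ultrafilter (FreeMonoid (α ⊕ Fin n))}
    (hJ : ∀ B ∈ p, IsJSetIn (S0 𝒜 n) (B ∩ S0 𝒜 n))
    {B : Set (FreeMonoid (α ⊕ Fin n))} (hB : B ∈ p) (m : ℕ) :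
    ∃ v, v ∈ SV 𝒜 n ∧ ∀ av ∈ tuples 𝒜 m n, subst v av ∈ B := by
  classical
  set u : FreeMonoid (α ⊕ Fin n) := baseu α n with hu
  have htf : ((fun av : Fin n → α => (fun _ : ℕ => subst u av)) '' tuples 𝒜 m n).Finite :=
    (tuples_finite 𝒜 hfin m n).image _
  set F : Finset (ℕ → FreeMonoid (α ⊕ Fin n)) := htf.toFinset with hF
  have hFS : ∀ f ∈ F, ∀ t, f t ∈ S0 𝒜 n := by
    intro f hf t
    rw [hF, Set.Finite.mem_toFinset] at hf
    obtain ⟨av, hav, rfl⟩ := hf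
    exact subst_baseu_mem_S0 𝒜 hn hav
  obtain ⟨m', hm', a, ha, t, ht, hmain⟩ := hJ B hB F hFS
  refine ⟨(List.ofFn fun i : Fin m' => a i.castSucc * u).prod * a (Fin.last m'), ?_, ?_⟩
  · constructor
    · intro x hx b hxb
      rw [FreeMonoid.toList_mul, List.mem_append] at hx
      have hS0 : ∀ j : Fin (m' + 1), x ∈ FreeMonoid.toList (a j) → b ∈ bigA 𝒜 := by
        intro j hj
        obtain ⟨c, hc, hxc⟩ := (ha j).2 x hj
        rw [hxb] at hxc
        rw [Sum.inl.injEq] at hxc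
        rwa [hxc]
      rcases hx with hx | hx
      · rw [mem_toList_listProd] at hx
        obtain ⟨z, hz, hxz⟩ := hx
        rw [List.mem_ofFn] at hz
        obtain ⟨i, rfl⟩ := hz
        rw [FreeMonoid.toList_mul, List.mem_append] at hxz
        rcases hxz with hxz | hxz
        · exact hS0 _ hxz
        · rw [hu, toList_baseu, List.mem_ofFn] at hxz
          obtain ⟨i, hi⟩ := hxz
          rw [hxb] at hi
          exact absurd hi (by simp)
      · exact hS0 _ hx
    · intro i
      rw [FreeMonoid.toList_mul, List.mem_append]
      left
      rw [mem_toList_listProd]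
      refine ⟨a (⟨0, by omega⟩ : Fin m').castSucc * u, List.mem_ofFn.2 ⟨_, rfl⟩, ?_⟩
      rw [FreeMonoid.toList_mul, List.mem_append]
      right
      rw [hu, toList_baseu, List.mem_ofFn]
      exact ⟨i, rfl⟩
  · intro av hav
    have hf : (fun _ : ℕ => subst u av) ∈ F := by
      rw [hF, Set.Finite.mem_toFinset]
      exact ⟨av, hav, rfl⟩
    have h1 := hmain _ hf
    have heq : subst ((List.ofFn fun i : Fin m' => a i.castSucc * u).prod * a (Fin.last m')) av
        = (List.ofFn fun i : Fin m' => a i.castSucc * (fun _ : ℕ => subst u av) (t i)).prod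
          * a (Fin.last m') := by
      rw [subst_mul, subst_listProd, List.map_ofFn,
        subst_fixed (fun x hx => (((ha (Fin.last m')).2 x hx).imp fun c hc => hc.2) ) av]
      have harg : ((fun x => subst x av) ∘ fun i : Fin m' => a i.castSucc * u)
          = fun i : Fin m' => a i.castSucc * subst u av := by
        funext i
        show subst (a i.castSucc * u) av = _
        rw [subst_mul,
          subst_fixed (fun x hx => (((ha i.castSucc).2 x hx).imp fun c hc => hc.2)) av]
      rw [harg]
    rw [heq]
    exact h1.1

def Xset (𝒜 : ℕ → Set α) {n : ℕ} (m : ℕ) (w : ℕ → FreeMonoid (α ⊕ Fin n)) :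
    Set (FreeMonoid (α ⊕ Fin n)) :=
  {x | ∃ l, 1 ≤ l ∧ ∃ ms : Fin l → ℕ, StrictMono ms ∧ (∀ i, ms i < m) ∧
    ∃ a : Fin l → Fin n → α, (∀ i, a i ∈ tuples 𝒜 (ms i) n) ∧
      x = (List.ofFn fun i => subst (w (ms i)) (a i)).prod}

theorem Xset_finite (𝒜 : ℕ → Set α) (hmono : Monotone 𝒜) (hfin : ∀ i, (𝒜 i).Finite)
    {n : ℕ} (m : ℕ) (w : ℕ → FreeMonoid (α ⊕ Fin n)) : (Xset 𝒜 m w).Finite := by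
  classical
  have hA : ∀ l : ℕ, ({a : Fin l → Fin n → α | ∀ i, a i ∈ tuples 𝒜 m n}).Finite := by
    intro l
    have : {a : Fin l → Fin n → α | ∀ i, a i ∈ tuples 𝒜 m n}
        = Set.pi Set.univ (fun _ : Fin l => tuples 𝒜 m n) := by
      ext a; simp [Set.mem_pi]
    rw [this]
    exact Set.Finite.pi fun _ => tuples_finite 𝒜 hfin m n
  have hBig : (⋃ l ∈ Finset.Icc 1 m,
      (fun q : (Fin l → Fin m) × (Fin l → Fin n → α) =>
        (List.ofFn fun i => subst (w (q.1 i)) (q.2 i)).prod) ''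
        (Set.univ ×ˢ {a : Fin l → Fin n → α | ∀ i, a i ∈ tuples 𝒜 m n})).Finite := by
    apply Set.Finite.biUnion (Finset.Icc 1 m).finite_toSet
    intro l _
    exact Set.Finite.image _ (Set.Finite.prod Set.finite_univ (hA l))
  apply Set.Finite.subset hBig
  rintro x ⟨l, hl, ms, hms, hlt, a, hta, rfl⟩
  have hinj : Function.Injective (fun i : Fin l => (⟨ms i, hlt i⟩ : Fin m)) := by
    intro i j hij
    exact hms.injective (by simpa using congrArg Fin.val hij)
  have hlm : l ≤ m := by
    have := Fintype.card_le_of_injective _ hinj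
    simpa using this
  apply Set.mem_biUnion (by exact_mod_cast Finset.mem_Icc.2 ⟨hl, hlm⟩)
  refine ⟨(fun i => ⟨ms i, hlt i⟩, a),
    ⟨Set.mem_univ _, fun i j => hmono (le_of_lt (hlt i)) (hta i j)⟩, rfl⟩

def Bset (𝒜 : ℕ → Set α) {n : ℕ} (p : Ultrafilter (FreeMonoid (α ⊕ Fin n)))
    (D : Set (FreeMonoid (α ⊕ Fin n))) (m : ℕ) (w : ℕ → FreeMonoid (α ⊕ Fin n)) :
    Set (FreeMonoid (α ⊕ Fin n)) :=
  starSet p D ∩ ⋂ x ∈ Xset 𝒜 m w, {y | x * y ∈ starSet p D}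

theorem Bset_mem (𝒜 : ℕ → Set α) (hmono : Monotone 𝒜) (hfin : ∀ i, (𝒜 i).Finite)
    {n : ℕ} {p : Ultrafilter (FreeMonoid (α ⊕ Fin n))} (hpp : p * p = p)
    {D : Set (FreeMonoid (α ⊕ Fin n))} (hD : D ∈ p) (m : ℕ)
    (w : ℕ → FreeMonoid (α ⊕ Fin n)) (hG : Xset 𝒜 m w ⊆ starSet p D) :
    Bset 𝒜 p D m w ∈ p := by
  apply Filter.inter_mem (starSet_mem hpp hD)
  rw [Filter.biInter_mem (Xset_finite 𝒜 hmono hfin m w)]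
  intro x hx
  exact starSet_shift hpp (hG hx)

noncomputable def stepw (𝒜 : ℕ → Set α) {n : ℕ} (p : Ultrafilter (FreeMonoid (α ⊕ Fin n)))
    (D : Set (FreeMonoid (α ⊕ Fin n))) (w : ℕ → FreeMonoid (α ⊕ Fin n)) (m : ℕ) :
    FreeMonoid (α ⊕ Fin n) :=
  Classical.epsilon fun v =>
    v ∈ SV 𝒜 n ∧ ∀ av ∈ tuples 𝒜 m n, subst v av ∈ Bset 𝒜 p D m w

theorem stepw_spec (𝒜 : ℕ → Set α) (hmono : Monotone 𝒜) (hfin : ∀ i, (𝒜 i).Finite)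
    {n : ℕ} (hn : 1 ≤ n) {p : Ultrafilter (FreeMonoid (α ⊕ Fin n))} (hpp : p * p = p)
    (hJ : ∀ B ∈ p, IsJSetIn (S0 𝒜 n) (B ∩ S0 𝒜 n))
    {D : Set (FreeMonoid (α ⊕ Fin n))} (hD : D ∈ p) (m : ℕ)
    (w : ℕ → FreeMonoid (α ⊕ Fin n)) (hG : Xset 𝒜 m w ⊆ starSet p D) :
    stepw 𝒜 p D w m ∈ SV 𝒜 n ∧
      ∀ av ∈ tuples 𝒜 m n, subst (stepw 𝒜 p D w m) av ∈ Bset 𝒜 p D m w :=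
  Classical.epsilon_spec
    (exists_good_word 𝒜 hfin hn hJ (Bset_mem 𝒜 hmono hfin hpp hD m w hG) m)

noncomputable def gseq (𝒜 : ℕ → Set α) {n : ℕ} (p : Ultrafilter (FreeMonoid (α ⊕ Fin n)))
    (D : Set (FreeMonoid (α ⊕ Fin n))) : ℕ → ℕ → FreeMonoid (α ⊕ Fin n)
  | 0 => fun _ => 1
  | m + 1 => Function.update (gseq 𝒜 p D m) m (stepw 𝒜 p D (gseq 𝒜 p D m) m)

theorem gseq_agree (𝒜 : ℕ → Set α) {n : ℕ} (p : Ultrafilter (FreeMonoid (α ⊕ Fin n)))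
    (D : Set (FreeMonoid (α ⊕ Fin n))) :
    ∀ m k, k < m → gseq 𝒜 p D m k = gseq 𝒜 p D (k + 1) k := by
  intro m
  induction m with
  | zero => intro k hk; omega
  | succ m ih =>
    intro k hk
    rcases Nat.lt_succ_iff_lt_or_eq.1 hk with h | rfl
    · show Function.update (gseq 𝒜 p D m) m _ k = _
      rw [Function.update_of_ne (Nat.ne_of_lt h)]
      exact ih k h
    · rfl


theorem statement3 (𝒜 : ℕ → Set α) (hmono : Monotone 𝒜)
    (hfin : ∀ i, (𝒜 i).Finite) (hne : ∀ i, (𝒜 i).Nonempty)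
    (n : ℕ) (hn : 1 ≤ n)
    (D : Set (FreeMonoid (α ⊕ Fin n))) (hD : D ⊆ S0 𝒜 n)
    (hCset : IsCSetIn (S0 𝒜 n) D) :
    ∃ w : ℕ → FreeMonoid (α ⊕ Fin n), (∀ i, w i ∈ SV 𝒜 n) ∧
      ∀ l : ℕ, 1 ≤ l → ∀ ms : Fin l → ℕ, StrictMono ms →
        ∀ a : Fin l → Fin n → α, (∀ i, a i ∈ tuples 𝒜 (ms i) n) →
          (List.ofFn fun i : Fin l => subst (w (ms i)) (a i)).prod ∈ D := by
  classical
  obtain ⟨p, hS, hpp, hJ, hDp⟩ := hCset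
  -- the invariant: all products from the prefix of `gseq` lie in `starSet p D`
  have hGood : ∀ m, Xset 𝒜 m (gseq 𝒜 p D m) ⊆ starSet p D := by
    intro m
    induction m with
    | zero =>
      rintro x ⟨l, hl, ms, hms, hlt, a, hta, rfl⟩
      exact absurd (hlt ⟨0, hl⟩) (Nat.not_lt_zero _)
    | succ m ih =>
      have hstep := stepw_spec 𝒜 hmono hfin hn hpp hJ hDp m (gseq 𝒜 p D m) ih
      rintro x ⟨l, hl, ms, hms, hlt, a, hta, rfl⟩
      obtain ⟨l, rfl⟩ : ∃ l', l = l' + 1 := ⟨l - 1, by omega⟩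
      have hgs : gseq 𝒜 p D (m + 1)
          = Function.update (gseq 𝒜 p D m) m (stepw 𝒜 p D (gseq 𝒜 p D m) m) := rfl
      by_cases hcase : ms (Fin.last l) < m
      · have hall : ∀ i, ms i < m :=
          fun i => lt_of_le_of_lt (hms.monotone (Fin.le_last i)) hcase
        have heq : (fun i : Fin (l + 1) => subst (gseq 𝒜 p D (m + 1) (ms i)) (a i))
            = fun i : Fin (l + 1) => subst (gseq 𝒜 p D m (ms i)) (a i) := by
          funext i
          rw [hgs, Function.update_of_ne (Nat.ne_of_lt (hall i))]
        rw [heq]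
        exact ih ⟨l + 1, hl, ms, hms, hall, a, hta, rfl⟩
      · have hlast : ms (Fin.last l) = m := by
          have := hlt (Fin.last l); omega
        have hsplit :
            (List.ofFn fun i : Fin (l + 1) => subst (gseq 𝒜 p D (m + 1) (ms i)) (a i)).prod
            = (List.ofFn fun i : Fin l =>
                subst (gseq 𝒜 p D m (ms i.castSucc)) (a i.castSucc)).prod
              * subst (stepw 𝒜 p D (gseq 𝒜 p D m) m) (a (Fin.last l)) := by
          rw [List.ofFn_succ', List.prod_concat]
          have h1 : (fun i : Fin l => subst (gseq 𝒜 p D (m + 1) (ms i.castSucc)) (a i.castSucc))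
              = fun i : Fin l => subst (gseq 𝒜 p D m (ms i.castSucc)) (a i.castSucc) := by
            funext i
            have hi : ms i.castSucc < m := by
              have := hms (Fin.castSucc_lt_last i); omega
            rw [hgs, Function.update_of_ne (Nat.ne_of_lt hi)]
          rw [h1, hgs, hlast, Function.update_self]
        rw [hsplit]
        have hmem : subst (stepw 𝒜 p D (gseq 𝒜 p D m) m) (a (Fin.last l))
            ∈ Bset 𝒜 p D m (gseq 𝒜 p D m) := by
          apply hstep.2
          rw [← hlast]; exact hta (Fin.last l)
        rcases Nat.eq_zero_or_pos l with rfl | hlpos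
        · simpa using hmem.1
        · have hP : (List.ofFn fun i : Fin l =>
              subst (gseq 𝒜 p D m (ms i.castSucc)) (a i.castSucc)).prod
              ∈ Xset 𝒜 m (gseq 𝒜 p D m) := by
            refine ⟨l, hlpos, fun i => ms i.castSucc,
              fun i j hij => hms (Fin.castSucc_lt_castSucc_iff.mpr hij), ?_,
              fun i => a i.castSucc, fun i => hta _, rfl⟩
            intro i
            show ms i.castSucc < m
            have := hms (Fin.castSucc_lt_last i); omega
          exact Set.mem_iInter₂.1 hmem.2 _ hP
  refine ⟨fun m => gseq 𝒜 p D (m + 1) m, ?_, ?_⟩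
  · intro i
    have h1 : gseq 𝒜 p D (i + 1) i = stepw 𝒜 p D (gseq 𝒜 p D i) i := by
      show Function.update (gseq 𝒜 p D i) i _ i = _
      rw [Function.update_self]
    show gseq 𝒜 p D (i + 1) i ∈ SV 𝒜 n
    rw [h1]
    exact (stepw_spec 𝒜 hmono hfin hn hpp hJ hDp i (gseq 𝒜 p D i) (hGood i)).1
  · intro l hl ms hms a hta
    obtain ⟨l, rfl⟩ : ∃ l', l = l' + 1 := ⟨l - 1, by omega⟩
    set N := ms (Fin.last l) + 1 with hN
    have hlt : ∀ i, ms i < N := fun i => Nat.lt_succ_of_le (hms.monotone (Fin.le_last i))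
    have heq : (fun i : Fin (l + 1) =>
        subst ((fun m => gseq 𝒜 p D (m + 1) m) (ms i)) (a i))
        = fun i : Fin (l + 1) => subst (gseq 𝒜 p D N (ms i)) (a i) := by
      funext i
      rw [gseq_agree 𝒜 p D N (ms i) (hlt i)]
    rw [heq]
    exact starSet_subset p D (hGood N ⟨l + 1, hl, ms, hms, hlt, a, hta, rfl⟩)

end InfHJ
end

section
/- Let m, n ∈ ℕ with n ≥ 1. For each ā ∈ Aₘⁿ let h_ā : Sₙ ∪ S₀ → S₀ be the map with h_ā(w) = w(ā) for w ∈ Sₙ and h_ā(w) = w for w ∈ S₀ (each h_ā is a semigroup homomorphism equal to the identity on S₀). If D ⊆ S₀ is a J-set in the semigroup S₀, then ⋂_{ā∈Aₘⁿ} h_ā⁻¹[D] is a J-set in the semigroup Sₙ ∪ S₀. -/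
open scoped BigOperators

attribute [local instance] Ultrafilter.mul Ultrafilter.semigroup

namespace InfHJ

variable {α : Type*}

lemma toList_subst {n : ℕ} (w : FreeMonoid (α ⊕ Fin n)) (x : Fin n → α) :
    FreeMonoid.toList (subst w x) =
      (FreeMonoid.toList w).map (Sum.elim Sum.inl fun i => Sum.inl (x i)) := rfl

lemma subst_eq_self {𝒜 : ℕ → Set α} {n : ℕ} {w : FreeMonoid (α ⊕ Fin n)}
    (hw : w ∈ S0 𝒜 n) (x : Fin n → α) : subst w x = w := by
  apply FreeMonoid.toList.injective
  rw [toList_subst]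
  have h := List.map_congr_left (l := FreeMonoid.toList w)
    (f := Sum.elim Sum.inl fun i => Sum.inl (x i)) (g := id) ?_
  · simpa using h
  · intro y hy
    obtain ⟨a, _, rfl⟩ := hw.2 y hy
    rfl

lemma subst_mem_S0 {𝒜 : ℕ → Set α} {m n : ℕ} {w : FreeMonoid (α ⊕ Fin n)}
    (hw : w ∈ SV 𝒜 n ∪ S0 𝒜 n) (hn : 1 ≤ n) {x : Fin n → α}
    (hx : x ∈ tuples 𝒜 m n) : subst w x ∈ S0 𝒜 n := by
  rcases hw with hw | hw
  · constructor
    · rw [toList_subst]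
      have := hw.2 ⟨0, hn⟩
      intro h
      simp [List.map_eq_nil_iff] at h
      simp [h] at this
    · rw [toList_subst]
      intro y hy
      obtain ⟨z, hz, rfl⟩ := List.mem_map.1 hy
      cases z with
      | inl a => exact ⟨a, hw.1 _ hz a rfl, rfl⟩
      | inr i => exact ⟨x i, Set.mem_iUnion.2 ⟨m, hx i⟩, rfl⟩
  · rw [subst_eq_self hw]; exact hw

lemma mul_mem_union {𝒜 : ℕ → Set α} {n : ℕ} {w w' : FreeMonoid (α ⊕ Fin n)}
    (hw : w ∈ SV 𝒜 n ∪ S0 𝒜 n) (hw' : w' ∈ SV 𝒜 n ∪ S0 𝒜 n) :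
    w * w' ∈ SV 𝒜 n ∪ S0 𝒜 n := by
  have htl : FreeMonoid.toList (w * w') = FreeMonoid.toList w ++ FreeMonoid.toList w' := rfl
  have hlet : ∀ x ∈ FreeMonoid.toList (w * w'), ∀ a : α, x = Sum.inl a → a ∈ bigA 𝒜 := by
    intro y hy a hya
    rw [htl, List.mem_append] at hy
    rcases hy with hy | hy
    · rcases hw with h | h
      · exact h.1 y hy a hya
      · obtain ⟨b, hb, rfl⟩ := h.2 y hy
        cases hya; exact hb
    · rcases hw' with h | h
      · exact h.1 y hy a hya
      · obtain ⟨b, hb, rfl⟩ := h.2 y hy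
        cases hya; exact hb
  rcases hw with h | h
  · exact Or.inl ⟨hlet, fun i => by rw [htl]; exact List.mem_append_left _ (h.2 i)⟩
  · rcases hw' with h' | h'
    · exact Or.inl ⟨hlet, fun i => by rw [htl]; exact List.mem_append_right _ (h'.2 i)⟩
    · refine Or.inr ⟨?_, ?_⟩
      · rw [htl]; simp [h.1]
      · intro y hy
        rw [htl, List.mem_append] at hy
        rcases hy with hy | hy
        · exact h.2 y hy
        · exact h'.2 y hy

lemma list_prod_mul_mem {𝒜 : ℕ → Set α} {n : ℕ} :
    ∀ l : List (FreeMonoid (α ⊕ Fin n)), (∀ x ∈ l, x ∈ SV 𝒜 n ∪ S0 𝒜 n) →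
      ∀ c ∈ SV 𝒜 n ∪ S0 𝒜 n, l.prod * c ∈ SV 𝒜 n ∪ S0 𝒜 n := by
  intro l
  induction l with
  | nil => intro _ c hc; simpa using hc
  | cons x l ih =>
      intro hl c hc
      rw [List.prod_cons, mul_assoc]
      exact mul_mem_union (hl x List.mem_cons_self)
        (ih (fun y hy => hl y (List.mem_cons_of_mem _ hy)) c hc)

set_option maxHeartbeats 1000000 in
theorem statement11 (𝒜 : ℕ → Set α) (hmono : Monotone 𝒜)
    (hfin : ∀ i, (𝒜 i).Finite) (hne : ∀ i, (𝒜 i).Nonempty)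
    (m n : ℕ) (hn : 1 ≤ n)
    (D : Set (FreeMonoid (α ⊕ Fin n))) (hD : D ⊆ S0 𝒜 n)
    (hJ : IsJSetIn (S0 𝒜 n) D) :
    IsJSetIn (SV 𝒜 n ∪ S0 𝒜 n)
      ((SV 𝒜 n ∪ S0 𝒜 n) ∩ ⋂ a ∈ tuples 𝒜 m n, (fun w => subst w a) ⁻¹' D) := by
  classical
  intro F hF
  -- the tuples form a finite set
  have htfin : (tuples 𝒜 m n).Finite := by
    refine Set.Finite.subset (Set.Finite.pi (fun _ : Fin n => hfin m)) ?_
    intro a ha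
    simp only [Set.mem_pi, Set.mem_univ, forall_true_left]
    exact fun j => ha j
  set TA : Finset (Fin n → α) := htfin.toFinset with hTA
  -- the auxiliary family of sequences in S₀
  set F' : Finset (ℕ → FreeMonoid (α ⊕ Fin n)) :=
    (F ×ˢ TA).image (fun p => fun t => subst (p.1 t) p.2) with hF'
  have hF'S : ∀ g ∈ F', ∀ t, g t ∈ S0 𝒜 n := by
    intro g hg t
    obtain ⟨⟨f, a⟩, hp, rfl⟩ := Finset.mem_image.1 hg
    rw [Finset.mem_product] at hp
    have ha : a ∈ tuples 𝒜 m n := (htfin.mem_toFinset).1 hp.2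
    exact subst_mem_S0 (hF f hp.1 t) hn ha
  obtain ⟨M, hM1, a, haS, t, htmono, hprod⟩ := hJ F' hF'S
  refine ⟨M, hM1, a, fun i => Or.inr (haS i), t, htmono, ?_⟩
  intro f hf
  constructor
  · exact list_prod_mul_mem _
      (by
        intro x hx
        obtain ⟨i, rfl⟩ := List.mem_ofFn.1 hx
        exact mul_mem_union (Or.inr (haS _)) (hF f hf _))
      _ (Or.inr (haS _))
  · rw [Set.mem_iInter₂]
    intro b hb
    have hbmem : b ∈ TA := htfin.mem_toFinset.2 hb
    have hg : (fun s => subst (f s) b) ∈ F' :=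
      Finset.mem_image.2 ⟨(f, b), Finset.mem_product.2 ⟨hf, hbmem⟩, rfl⟩
    simp only [Set.mem_preimage]
    have hmap : ∀ w : FreeMonoid (α ⊕ Fin n), subst w b =
        (FreeMonoid.map (Sum.elim Sum.inl fun i => Sum.inl (b i))) w := fun _ => rfl
    rw [hmap, map_mul, map_list_prod]
    have : (List.ofFn fun i : Fin M => a i.castSucc * f (t i)).map
        (FreeMonoid.map (Sum.elim Sum.inl fun i => Sum.inl (b i))) =
        List.ofFn fun i : Fin M => a i.castSucc * subst (f (t i)) b := by
      rw [List.map_ofFn]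
      congr 1
      funext i
      show (FreeMonoid.map _) (a i.castSucc * f (t i)) = _
      rw [map_mul, ← hmap, ← hmap, subst_eq_self (haS _)]
    rw [this, ← hmap, subst_eq_self (haS _)]
    exact hprod _ hg

end InfHJ
end
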